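/- Let C ≥ 1, A > 0, and T > 0 with 4C³TA² < 1. Suppose a nonnegative continuous function n : [0,T] → ℝ satisfies, for all t ∈ [0,T], n(t) ≤ C e^{C N(t)} (A + ∫_0^t e^{-C N(τ)} n(τ)³ dτ) whenever N(t) = ∫_0^t n(τ)² dτ is computed using the a priori bound n(τ) ≤ C A (1 - 4C³ τ A²)^{-1/2}. Then indeed the bound n(t) ≤ C A (1 - 4C³ t A²)^{-1/2} propagates: assuming n(τ) ≤ C A (1 - 4C³τA²)^{-1/2} for τ ≤ t, the right-hand side is bounded by C A (1 - 4C³ t A²)^{-1/2}. -/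

import Mathlib

open Set intervalIntegral

/-- closure of the uniform-bound bootstrap: if n(τ) ≤ CA(1-4C³τA²)^{-1/2}
on [0,t], then C e^{CN(t)} (A + ∫_0^t e^{-CN(τ)} n(τ)³ dτ) ≤ CA(1-4C³tA²)^{-1/2},
where N(t) = ∫_0^t n(τ)² dτ. -/
theorem bootstrap_closure
    (C A T t : ℝ) (hC : 1 ≤ C) (hA : 0 < A) (hT : 0 < T)
    (hsmall : 4 * C ^ 3 * T * A ^ 2 < 1) (ht : t ∈ Icc (0 : ℝ) T)
    (n : ℝ → ℝ)
    (hcont : ContinuousOn n (Icc 0 T))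
    (hnonneg : ∀ τ ∈ Icc (0 : ℝ) T, 0 ≤ n τ)
    (hb : ∀ τ ∈ Icc (0 : ℝ) t, n τ ≤ C * A * (1 - 4 * C ^ 3 * τ * A ^ 2) ^ (-(1 : ℝ) / 2)) :
    C * Real.exp (C * ∫ τ in (0 : ℝ)..t, (n τ) ^ 2) *
        (A + ∫ τ in (0 : ℝ)..t,
          Real.exp (-(C * ∫ s in (0 : ℝ)..τ, (n s) ^ 2)) * (n τ) ^ 3)
      ≤ C * A * (1 - 4 * C ^ 3 * t * A ^ 2) ^ (-(1 : ℝ) / 2) := by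
  obtain ⟨ht0, htT⟩ := ht
  have hC0 : (0:ℝ) < C := lt_of_lt_of_le one_pos hC
  set K : ℝ := 4 * C ^ 3 * A ^ 2 with hK
  have hKpos : 0 < K := by positivity
  set ρ : ℝ → ℝ := fun s => 1 - K * s with hρdef
  have hρeq : ∀ s : ℝ, 1 - 4 * C ^ 3 * s * A ^ 2 = ρ s := by
    intro s; simp only [hρdef, hK]; ring
  have hρT : 0 < ρ T := by
    have h1 : K * T = 4 * C ^ 3 * T * A ^ 2 := by rw [hK]; ring
    simp only [hρdef]; linarith [h1 ▸ hsmall]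
  have hρcont : Continuous ρ := by fun_prop
  have hρpos : ∀ s ∈ Icc (0:ℝ) T, 0 < ρ s := by
    intro s hs
    have h2 : K * s ≤ K * T := mul_le_mul_of_nonneg_left hs.2 hKpos.le
    simp only [hρdef] at hρT ⊢
    linarith
  have hsubO : Icc (0:ℝ) t ⊆ Icc 0 T := Icc_subset_Icc le_rfl htT
  have htT' : t ∈ Icc (0:ℝ) T := ⟨ht0, htT⟩
  have hρt : 0 < ρ t := hρpos t htT'
  have hn2cont : ContinuousOn (fun s => n s ^ 2) (Icc 0 T) := hcont.pow 2
  have hint_n2 : ∀ a b, a ∈ Icc (0:ℝ) T → b ∈ Icc (0:ℝ) T →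
      IntervalIntegrable (fun s => n s ^ 2) MeasureTheory.volume a b := by
    intro a b ha hb'
    exact (hn2cont.mono (uIcc_subset_Icc ha hb')).intervalIntegrable
  -- FTC for (ρ s)⁻¹
  have hderρ : ∀ s : ℝ, HasDerivAt ρ (-K) s := by
    intro s
    simpa using ((hasDerivAt_id s).const_mul K).const_sub 1
  have hFTC1 : ∀ τ ∈ Icc (0:ℝ) t,
      ∫ s in τ..t, (ρ s)⁻¹ = (Real.log (ρ τ) - Real.log (ρ t)) / K := by
    intro τ hτ
    have huIcc : uIcc τ t ⊆ Icc (0:ℝ) T := by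
      rw [uIcc_of_le hτ.2]
      exact (Icc_subset_Icc hτ.1 htT)
    have hder : ∀ s ∈ uIcc τ t,
        HasDerivAt (fun u => -(K⁻¹) * Real.log (ρ u)) ((ρ s)⁻¹) s := by
      intro s hs
      have hρs := hρpos s (huIcc hs)
      have hd2 := ((hderρ s).log hρs.ne').const_mul (-(K⁻¹))
      refine hd2.congr_deriv ?_
      field_simp
    have hintinv : IntervalIntegrable (fun s => (ρ s)⁻¹) MeasureTheory.volume τ t := by
      apply ContinuousOn.intervalIntegrable
      exact (hρcont.continuousOn.inv₀ (fun s hs => (hρpos s (huIcc hs)).ne'))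
    rw [intervalIntegral.integral_eq_sub_of_hasDerivAt hder hintinv]
    field_simp
    ring
  -- Step A: exponential bound
  have hlogint : ∀ τ ∈ Icc (0:ℝ) t,
      C * ∫ s in τ..t, n s ^ 2 ≤ (Real.log (ρ τ) - Real.log (ρ t)) / 4 := by
    intro τ hτ
    have hτT : τ ∈ Icc (0:ℝ) T := hsubO hτ
    have huIcc : uIcc τ t ⊆ Icc (0:ℝ) T := by
      rw [uIcc_of_le hτ.2]; exact Icc_subset_Icc hτ.1 htT
    have h1 : ∫ s in τ..t, n s ^ 2 ≤ ∫ s in τ..t, C^2 * A^2 * (ρ s)⁻¹ := by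
      apply intervalIntegral.integral_mono_on hτ.2 (hint_n2 τ t hτT htT')
      · apply ContinuousOn.intervalIntegrable
        exact (continuousOn_const.mul
          (hρcont.continuousOn.inv₀ (fun s hs => (hρpos s (huIcc hs)).ne')))
      · intro s hs
        have hsT : s ∈ Icc (0:ℝ) T := ⟨hτ.1.trans hs.1, hs.2.trans htT⟩
        have hρs := hρpos s hsT
        have hbs := hb s ⟨hτ.1.trans hs.1, hs.2⟩
        have hns := hnonneg s hsT
        rw [hρeq s] at hbs
        calc n s ^ 2 ≤ (C * A * (ρ s) ^ (-(1:ℝ)/2)) ^ 2 := by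
              exact pow_le_pow_left₀ hns hbs 2
          _ = C^2 * A^2 * (ρ s)⁻¹ := by
              rw [mul_pow, mul_pow, ← Real.rpow_natCast ((ρ s) ^ (-(1:ℝ)/2)) 2,
                ← Real.rpow_mul hρs.le]
              norm_num [Real.rpow_neg_one]
    calc C * ∫ s in τ..t, n s ^ 2 ≤ C * ∫ s in τ..t, C^2 * A^2 * (ρ s)⁻¹ :=
          mul_le_mul_of_nonneg_left h1 hC0.le
      _ = C * (C^2 * A^2 * ∫ s in τ..t, (ρ s)⁻¹) := by
          rw [intervalIntegral.integral_const_mul]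
      _ = (Real.log (ρ τ) - Real.log (ρ t)) / 4 := by
          rw [hFTC1 τ hτ, hK]
          field_simp
  have hexp : ∀ τ ∈ Icc (0:ℝ) t,
      Real.exp (C * ∫ s in τ..t, n s ^ 2) ≤ (ρ τ) ^ ((1:ℝ)/4) * (ρ t) ^ (-(1:ℝ)/4) := by
    intro τ hτ
    have hρτ := hρpos τ (hsubO hτ)
    refine (Real.exp_le_exp.mpr (hlogint τ hτ)).trans_eq ?_
    rw [Real.rpow_def_of_pos hρτ, Real.rpow_def_of_pos hρt, ← Real.exp_add]
    congr 1
    ring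
  -- FTC for (ρ s)^(-5/4)
  have hFTC2 : ∫ s in (0:ℝ)..t, (ρ s) ^ (-(5:ℝ)/4)
      = ((ρ t) ^ (-(1:ℝ)/4) - 1) * (4 / K) := by
    have huIcc : uIcc (0:ℝ) t ⊆ Icc (0:ℝ) T := by
      rw [uIcc_of_le ht0]; exact hsubO
    have hder : ∀ s ∈ uIcc (0:ℝ) t,
        HasDerivAt (fun u => (4/K) * (ρ u) ^ (-(1:ℝ)/4)) ((ρ s) ^ (-(5:ℝ)/4)) s := by
      intro s hs
      have hρs := hρpos s (huIcc hs)
      have hd2 := ((hderρ s).rpow_const (p := -(1:ℝ)/4) (Or.inl hρs.ne')).const_mul (4/K)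
      refine hd2.congr_deriv ?_
      rw [show -(1:ℝ)/4 - 1 = -(5:ℝ)/4 by norm_num]
      field_simp
    have hint52 : IntervalIntegrable (fun s => (ρ s) ^ (-(5:ℝ)/4)) MeasureTheory.volume 0 t := by
      apply ContinuousOn.intervalIntegrable
      exact (hρcont.continuousOn.rpow_const (fun s hs => Or.inl (hρpos s (huIcc hs)).ne'))
    rw [intervalIntegral.integral_eq_sub_of_hasDerivAt hder hint52]
    have : ρ 0 = 1 := by simp [hρdef]
    rw [this, Real.one_rpow]
    ring
  -- the integrand of I is continuous on [0, t]
  have hNcont : ContinuousOn (fun τ => ∫ s in (0:ℝ)..τ, n s ^ 2) (Icc 0 t) := by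
    have hio : MeasureTheory.IntegrableOn (fun s => n s ^ 2) (uIcc (0:ℝ) t)
        MeasureTheory.volume := by
      rw [uIcc_of_le ht0]
      exact (hn2cont.mono hsubO).integrableOn_compact isCompact_Icc
    simpa [uIcc_of_le ht0] using continuousOn_primitive_interval hio
  have hIcont : ContinuousOn
      (fun τ => Real.exp (-(C * ∫ s in (0:ℝ)..τ, n s ^ 2)) * n τ ^ 3) (Icc 0 t) := by
    apply ContinuousOn.mul
    · exact ((hNcont.const_smul C).neg).rexp
    · exact (hcont.mono hsubO).pow 3
  -- main integral bound
  have hEI : Real.exp (C * ∫ τ in (0:ℝ)..t, n τ ^ 2) *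
      (∫ τ in (0:ℝ)..t, Real.exp (-(C * ∫ s in (0:ℝ)..τ, n s ^ 2)) * n τ ^ 3)
      ≤ A * ((ρ t) ^ (-(1:ℝ)/4) * ((ρ t) ^ (-(1:ℝ)/4) - 1)) := by
    rw [← intervalIntegral.integral_const_mul]
    have hle : (∫ τ in (0:ℝ)..t, Real.exp (C * ∫ s in (0:ℝ)..t, n s ^ 2) *
          (Real.exp (-(C * ∫ s in (0:ℝ)..τ, n s ^ 2)) * n τ ^ 3))
        ≤ ∫ τ in (0:ℝ)..t, C^3 * A^3 * (ρ t) ^ (-(1:ℝ)/4) * (ρ τ) ^ (-(5:ℝ)/4) := by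
      apply intervalIntegral.integral_mono_on ht0
      · apply ContinuousOn.intervalIntegrable
        rw [uIcc_of_le ht0]
        exact continuousOn_const.mul hIcont
      · apply ContinuousOn.intervalIntegrable
        rw [uIcc_of_le ht0]
        exact continuousOn_const.mul
          (hρcont.continuousOn.rpow_const (fun s hs => Or.inl (hρpos s (hsubO hs)).ne'))
      · intro τ hτ
        have hρτ := hρpos τ (hsubO hτ)
        have hτT : τ ∈ Icc (0:ℝ) T := hsubO hτ
        have hsplit : (∫ s in (0:ℝ)..t, n s ^ 2) - (∫ s in (0:ℝ)..τ, n s ^ 2)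
            = ∫ s in τ..t, n s ^ 2 :=
          intervalIntegral.integral_interval_sub_left
            (hint_n2 0 t (left_mem_Icc.mpr hT.le) htT') (hint_n2 0 τ (left_mem_Icc.mpr hT.le) hτT)
        have hexps : Real.exp (C * ∫ s in (0:ℝ)..t, n s ^ 2) *
            Real.exp (-(C * ∫ s in (0:ℝ)..τ, n s ^ 2))
            = Real.exp (C * ∫ s in τ..t, n s ^ 2) := by
          rw [← Real.exp_add, ← hsplit]
          congr 1
          ring
        have hbτ := hb τ hτ
        rw [hρeq τ] at hbτ
        have hnτ := hnonneg τ hτT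
        have hcube : n τ ^ 3 ≤ C^3 * A^3 * (ρ τ) ^ (-(3:ℝ)/2) := by
          calc n τ ^ 3 ≤ (C * A * (ρ τ) ^ (-(1:ℝ)/2)) ^ 3 := pow_le_pow_left₀ hnτ hbτ 3
            _ = C^3 * A^3 * (ρ τ) ^ (-(3:ℝ)/2) := by
              rw [mul_pow, mul_pow, ← Real.rpow_natCast ((ρ τ) ^ (-(1:ℝ)/2)) 3,
                ← Real.rpow_mul hρτ.le]
              norm_num
        calc Real.exp (C * ∫ s in (0:ℝ)..t, n s ^ 2) *
              (Real.exp (-(C * ∫ s in (0:ℝ)..τ, n s ^ 2)) * n τ ^ 3)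
            = Real.exp (C * ∫ s in τ..t, n s ^ 2) * n τ ^ 3 := by
              rw [← mul_assoc, hexps]
          _ ≤ ((ρ τ) ^ ((1:ℝ)/4) * (ρ t) ^ (-(1:ℝ)/4)) * (C^3 * A^3 * (ρ τ) ^ (-(3:ℝ)/2)) := by
              apply mul_le_mul (hexp τ hτ) hcube (pow_nonneg hnτ 3)
              positivity
          _ = C^3 * A^3 * (ρ t) ^ (-(1:ℝ)/4) * ((ρ τ) ^ ((1:ℝ)/4) * (ρ τ) ^ (-(3:ℝ)/2)) := by
              ring
          _ = C^3 * A^3 * (ρ t) ^ (-(1:ℝ)/4) * (ρ τ) ^ (-(5:ℝ)/4) := by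
              rw [← Real.rpow_add hρτ]
              norm_num
    refine hle.trans (le_of_eq ?_)
    rw [intervalIntegral.integral_const_mul, hFTC2]
    rw [hK]
    have h4 : C^3 * A^3 * (4 / (4 * C^3 * A^2)) = A := by
      field_simp
    calc C^3 * A^3 * (ρ t) ^ (-(1:ℝ)/4) * (((ρ t) ^ (-(1:ℝ)/4) - 1) * (4 / (4 * C^3 * A^2)))
        = (C^3 * A^3 * (4 / (4 * C^3 * A^2))) * ((ρ t) ^ (-(1:ℝ)/4) * ((ρ t) ^ (-(1:ℝ)/4) - 1)) := by
          ring
      _ = A * ((ρ t) ^ (-(1:ℝ)/4) * ((ρ t) ^ (-(1:ℝ)/4) - 1)) := by rw [h4]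
  -- bound for A * E
  have hAE : Real.exp (C * ∫ τ in (0:ℝ)..t, n τ ^ 2) ≤ (ρ t) ^ (-(1:ℝ)/4) := by
    have h := hexp 0 ⟨le_rfl, ht0⟩
    have hρ0 : ρ 0 = 1 := by simp [hρdef]
    rw [hρ0, Real.one_rpow, one_mul] at h
    exact h
  -- final assembly
  rw [hρeq t]
  set x := (ρ t) ^ (-(1:ℝ)/4) with hx
  have hxx : x * x = (ρ t) ^ (-(1:ℝ)/2) := by
    rw [hx, ← Real.rpow_add hρt]
    norm_num
  set E := Real.exp (C * ∫ τ in (0:ℝ)..t, n τ ^ 2) with hE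
  set I := ∫ τ in (0:ℝ)..t, Real.exp (-(C * ∫ s in (0:ℝ)..τ, n s ^ 2)) * n τ ^ 3 with hI
  have hfin : E * A + E * I ≤ A * x + A * (x * (x - 1)) := by
    have h1 : E * A ≤ A * x := by
      calc E * A = A * E := by ring
        _ ≤ A * x := mul_le_mul_of_nonneg_left hAE hA.le
    exact add_le_add h1 hEI
  calc C * E * (A + I) = C * (E * A + E * I) := by ring
    _ ≤ C * (A * x + A * (x * (x - 1))) := mul_le_mul_of_nonneg_left hfin hC0.le
    _ = C * A * (x * x) := by ring
    _ = C * A * (ρ t) ^ (-(1:ℝ)/2) := by rw [hxx]
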